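/- trace((Φ∘A)∘(Φ∘A)) = trace(A∘A), and if A ≠ 0 then trace(A∘A) > 0. (Pointwise positivity of the metric Ω_Φ(·, J_Φ ·) underlying the Kähler structure on the space 𝒦_η of K-contact structures.) -/

import Mathlib

/-!
The metric `g(X, Y) = Ω(X, ΦY) + η(X)η(Y)` of the K-contact structure is a Euclidean inner
product, and every tangent vector `A` is `g`-self-adjoint. Since `A` anticommutes with `Φ` and
takes values in `ker η`, on which `Φ² = -1`, one has `(ΦA)² = -Φ²A² = A²`. Finally, for a
self-adjoint `A ≠ 0`, `trace (A²) = ∑ ‖A eᵢ‖²` over a `g`-orthonormal basis is positive.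
-/

open LinearMap (BilinForm)

namespace LinearMap

theorem IsSymmetric.trace_comp_self_pos {E : Type*} [NormedAddCommGroup E]
    [InnerProductSpace ℝ E] [FiniteDimensional ℝ E] {T : E →ₗ[ℝ] E} (hT : T.IsSymmetric)
    (hT0 : T ≠ 0) : 0 < trace ℝ E (T ∘ₗ T) := by
  let b := stdOrthonormalBasis ℝ E
  have htrace : trace ℝ E (T ∘ₗ T) = ∑ i, ‖T (b i)‖ ^ 2 := by
    rw [trace_eq_sum_inner _ b]
    refine Fintype.sum_congr _ _ fun i => ?_
    rw [comp_apply, ← hT, real_inner_self_eq_norm_sq]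
  obtain ⟨i, hi⟩ : ∃ i, T (b i) ≠ 0 := by
    by_contra! h
    exact hT0 (b.toBasis.ext fun i => by simpa using h i)
  rw [htrace]
  exact Finset.sum_pos' (fun j _ => sq_nonneg _) ⟨i, Finset.mem_univ i, by positivity⟩

namespace BilinForm

variable {V : Type*} [AddCommGroup V] [Module ℝ V]

/-- Creates a norm on `V`: use only where `V` has none, to avoid instance diamonds. -/
abbrev toInnerProductCore (B : BilinForm ℝ V) (hB : B.IsSymm) (hpos : ∀ x, x ≠ 0 → 0 < B x x) :
    InnerProductSpace.Core ℝ V where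
  inner x y := B x y
  conj_inner_symm x y := hB.eq y x
  re_inner_nonneg x := by
    rcases eq_or_ne x 0 with rfl | hx
    · simp
    · exact (hpos x hx).le
  add_left x y z := by simp
  smul_left x y r := by simp
  definite x h := by
    by_contra hx
    exact (hpos x hx).ne' h

theorem trace_comp_self_pos [FiniteDimensional ℝ V] {B : BilinForm ℝ V} (hB : B.IsSymm)
    (hpos : ∀ x, x ≠ 0 → 0 < B x x) {T : V →ₗ[ℝ] V} (hT : B.IsSelfAdjoint T) (hT0 : T ≠ 0) :
    0 < trace ℝ V (T ∘ₗ T) := by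
  let core := B.toInnerProductCore hB hpos
  let : NormedAddCommGroup V := core.toNormedAddCommGroup
  let : InnerProductSpace ℝ V := InnerProductSpace.ofCore core.toCore
  exact IsSymmetric.trace_comp_self_pos (fun x y => hT x y) hT0

end BilinForm

end LinearMap

namespace KContact

variable {V : Type*} [AddCommGroup V] [Module ℝ V] {η : V →ₗ[ℝ] ℝ} {ξ : V} {Φ : V →ₗ[ℝ] V}
  {Ω : V →ₗ[ℝ] V →ₗ[ℝ] ℝ} {A : V →ₗ[ℝ] V}

theorem phi_reeb_eq_zero (hη : η ξ = 1) (hΦ : ∀ X, Φ (Φ X) = -X + η X • ξ) : Φ ξ = 0 := by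
  have hΦΦξ : Φ (Φ ξ) = 0 := by rw [hΦ, hη, one_smul, neg_add_cancel]
  have hΦξ : Φ ξ = η (Φ ξ) • ξ := by
    have := hΦ (Φ ξ)
    rwa [hΦΦξ, map_zero, eq_comm, neg_add_eq_zero] at this
  have hsq : η (Φ ξ) * η (Φ ξ) = 0 := by
    have := congrArg η (congrArg Φ hΦξ)
    rwa [hΦΦξ, map_smul, map_smul, map_zero, smul_eq_mul, eq_comm] at this
  rw [hΦξ, mul_self_eq_zero.mp hsq, zero_smul]

theorem eta_apply_eq_zero (hη : η ξ = 1) (hΦ : ∀ X, Φ (Φ X) = -X + η X • ξ) (hAξ : A ξ = 0)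
    (hAΦ : ∀ X, A (Φ X) + Φ (A X) = 0) (X : V) : η (A X) = 0 := by
  -- Apply `A` to `Φ² X = -X + η(X) ξ` and use `AΦ = -ΦA` twice: `AΦ² = Φ²A`.
  have h := hAΦ (Φ X)
  rw [hΦ, eq_neg_of_add_eq_zero_left (hAΦ X), map_neg, hΦ, map_add, map_neg, map_smul, hAξ,
    smul_zero, add_zero] at h
  have hξ : η (A X) • ξ = 0 := by linear_combination (norm := module) -h
  simpa [hη] using congrArg η hξ

theorem phi_comp_sq_eq (hΦ : ∀ X, Φ (Φ X) = -X + η X • ξ) (hAΦ : ∀ X, A (Φ X) + Φ (A X) = 0)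
    (hηA : ∀ X, η (A X) = 0) : (Φ ∘ₗ A) ∘ₗ (Φ ∘ₗ A) = A ∘ₗ A := by
  ext X
  simp only [LinearMap.comp_apply]
  rw [eq_neg_of_add_eq_zero_left (hAΦ (A X)), map_neg, hΦ, hηA, zero_smul, add_zero, neg_neg]

variable (η Φ Ω) in
def metric : BilinForm ℝ V :=
  Ω.compl₂ Φ + (LinearMap.mul ℝ ℝ).compl₁₂ η η

@[simp]
theorem metric_apply (X Y : V) : metric η Φ Ω X Y = Ω X (Φ Y) + η X * η Y := rfl

theorem metric_isSymm (hΦ : ∀ X, Φ (Φ X) = -X + η X • ξ) (hΩalt : Ω.IsAlt)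
    (hΩξ : ∀ X, Ω ξ X = 0) (hΩΦ : ∀ X Y, Ω (Φ X) (Φ Y) = Ω X Y) : (metric η Φ Ω).IsSymm := by
  refine ⟨fun X Y => ?_⟩
  have h := hΩΦ X (Φ Y)
  rw [hΦ, map_add, map_neg, map_smul, ← hΩalt.neg ξ, hΩξ, neg_zero, smul_zero, add_zero,
    hΩalt.neg] at h
  simp only [metric_apply, ← h]
  ring

theorem metric_pos (hη : η ξ = 1) (hΦ : ∀ X, Φ (Φ X) = -X + η X • ξ) (hΩξ : ∀ X, Ω ξ X = 0)
    (hΩpos : ∀ Z, η Z = 0 → Z ≠ 0 → 0 < Ω Z (Φ Z)) (X : V) (hX : X ≠ 0) :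
    0 < metric η Φ Ω X X := by
  set Z := X - η X • ξ
  have hηZ : η Z = 0 := by simp [Z, hη]
  have hΩ : Ω X (Φ X) = Ω Z (Φ Z) := by
    simp [Z, phi_reeb_eq_zero hη hΦ, hΩξ]
  rw [metric_apply, hΩ]
  rcases eq_or_ne Z 0 with hZ | hZ
  · have hηX : η X ≠ 0 := fun h => hX (by simpa [Z, h] using hZ)
    simpa [hZ] using mul_self_pos.mpr hηX
  · exact add_pos_of_pos_of_nonneg (hΩpos Z hηZ hZ) (mul_self_nonneg _)

theorem metric_isSelfAdjoint (hAΦ : ∀ X, A (Φ X) + Φ (A X) = 0)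
    (hAΩ : ∀ X Y, Ω (A X) Y + Ω X (A Y) = 0) (hηA : ∀ X, η (A X) = 0) :
    (metric η Φ Ω).IsSelfAdjoint A := by
  intro X Y
  have h := hAΩ X (Φ Y)
  rw [eq_neg_of_add_eq_zero_left (hAΦ Y), map_neg] at h
  simp only [metric_apply, hηA, zero_mul, mul_zero, add_zero]
  linarith

end KContact

open KContact in
theorem kcontact_trace_positivity_general
    {V : Type*} [AddCommGroup V] [Module ℝ V] [FiniteDimensional ℝ V]
    (η : V →ₗ[ℝ] ℝ) (ξ : V) (Φ : V →ₗ[ℝ] V)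
    (Ω : V →ₗ[ℝ] V →ₗ[ℝ] ℝ)
    (hη : η ξ = 1)
    (hΦ : ∀ X : V, Φ (Φ X) = -X + η X • ξ)
    (hΩalt : ∀ X : V, Ω X X = 0)
    (hΩξ : ∀ X : V, Ω ξ X = 0)
    (hΩΦ : ∀ X Y : V, Ω (Φ X) (Φ Y) = Ω X Y)
    (hΩpos : ∀ Z : V, η Z = 0 → Z ≠ 0 → 0 < Ω Z (Φ Z))
    (A : V →ₗ[ℝ] V)
    (hAξ : A ξ = 0)
    (hAΦ : ∀ X : V, A (Φ X) + Φ (A X) = 0)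
    (hAΩ : ∀ X Y : V, Ω (A X) Y + Ω X (A Y) = 0) :
    LinearMap.trace ℝ V ((Φ ∘ₗ A) ∘ₗ (Φ ∘ₗ A)) = LinearMap.trace ℝ V (A ∘ₗ A) ∧
    (A ≠ 0 → 0 < LinearMap.trace ℝ V (A ∘ₗ A)) := by
  have hηA := eta_apply_eq_zero hη hΦ hAξ hAΦ
  exact ⟨by rw [phi_comp_sq_eq hΦ hAΦ hηA],
    LinearMap.BilinForm.trace_comp_self_pos (metric_isSymm hΦ hΩalt hΩξ hΩΦ)
      (metric_pos hη hΦ hΩξ hΩpos) (metric_isSelfAdjoint hAΦ hAΩ hηA)⟩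

/-- trace((Φ∘A)∘(Φ∘A)) = trace(A∘A), and trace(A∘A) > 0 if A ≠ 0: pointwise
positivity of the metric underlying the Kähler structure on 𝒦_η. -/
theorem kcontact_trace_positivity
    {V : Type*} [AddCommGroup V] [Module ℝ V] [FiniteDimensional ℝ V]
    (η : V →ₗ[ℝ] ℝ) (ξ : V) (Φ : V →ₗ[ℝ] V)
    (Ω : V →ₗ[ℝ] V →ₗ[ℝ] ℝ)
    (hη : η ξ = 1)
    (hΦ : ∀ X : V, Φ (Φ X) = -X + η X • ξ)
    (hΩalt : ∀ X : V, Ω X X = 0)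
    (hΩξ : ∀ X : V, Ω ξ X = 0)
    (hΩΦ : ∀ X Y : V, Ω (Φ X) (Φ Y) = Ω X Y)
    (hΩpos : ∀ Z : V, η Z = 0 → Z ≠ 0 → 0 < Ω Z (Φ Z))
    (g : V → V → ℝ)
    (hg : ∀ X Y : V, g X Y = Ω X (Φ Y) + η X * η Y)
    (A : V →ₗ[ℝ] V)
    (hAξ : A ξ = 0)
    (hAΦ : ∀ X : V, A (Φ X) + Φ (A X) = 0)
    (hAΩ : ∀ X Y : V, Ω (A X) Y + Ω X (A Y) = 0) :
    LinearMap.trace ℝ V ((Φ ∘ₗ A) ∘ₗ (Φ ∘ₗ A)) = LinearMap.trace ℝ V (A ∘ₗ A) ∧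
    (A ≠ 0 → 0 < LinearMap.trace ℝ V (A ∘ₗ A)) :=
  kcontact_trace_positivity_general η ξ Φ Ω hη hΦ hΩalt hΩξ hΩΦ hΩpos A hAξ hAΦ hAΩ
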